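/- Let γ > 0 and z ∈ ℝ². Define the shrinkage shrink_γ(z) := (max(‖z‖₂ − γ, 0)/‖z‖₂)·z when z ≠ 0 and shrink_γ(0) := 0. Then shrink_γ(z) is the unique global minimizer over ℝ² of the function p ↦ γ‖p‖₂ + (1/2)‖p − z‖₂². In particular, the minimizer is 0 if and only if ‖z‖₂ ≤ γ. -/

import Mathlib

/-!
The objective `γ‖p‖ + ½‖p - z‖²` is a convex function plus a `1`-strongly convex quadratic. Since
`z - s` is `γ` times a subgradient of the norm at `s = shrink_γ(z)` (by Cauchy–Schwarz), expanding
`‖p - z‖² = ‖(p - s) - (z - s)‖²` gives `F p ≥ F s + ½‖p - s‖²`, which is minimality and uniqueness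
at once. This works in any real inner product space; `ℝ²` is `WithLp 2 (ℝ × ℝ)`.
-/

open RealInnerProductSpace

noncomputable section

variable {E : Type*} [NormedAddCommGroup E] [InnerProductSpace ℝ E]

def shrinkage (γ : ℝ) (z : E) : E := (max (‖z‖ - γ) 0 / ‖z‖) • z

lemma shrinkage_of_norm_le {γ : ℝ} {z : E} (h : ‖z‖ ≤ γ) : shrinkage γ z = 0 := by
  simp [shrinkage, max_eq_right (sub_nonpos.mpr h)]

lemma shrinkage_of_lt_norm {γ : ℝ} (hγ : 0 ≤ γ) {z : E} (h : γ < ‖z‖) :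
    shrinkage γ z = (1 - γ / ‖z‖) • z := by
  rw [shrinkage, max_eq_left (sub_nonneg.mpr h.le), sub_div, div_self (hγ.trans_lt h).ne']

lemma norm_shrinkage_of_lt_norm {γ : ℝ} (hγ : 0 ≤ γ) {z : E} (h : γ < ‖z‖) :
    ‖shrinkage γ z‖ = ‖z‖ - γ := by
  have hz : 0 < ‖z‖ := hγ.trans_lt h
  have hcoeff : 0 ≤ 1 - γ / ‖z‖ := sub_nonneg.mpr ((div_le_one hz).mpr h.le)
  rw [shrinkage_of_lt_norm hγ h, norm_smul, Real.norm_of_nonneg hcoeff, sub_mul,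
    div_mul_cancel₀ _ hz.ne', one_mul]

lemma shrinkage_eq_zero_iff {γ : ℝ} (hγ : 0 ≤ γ) {z : E} : shrinkage γ z = 0 ↔ ‖z‖ ≤ γ := by
  refine ⟨fun h => ?_, shrinkage_of_norm_le⟩
  by_contra! hlt
  have := norm_shrinkage_of_lt_norm hγ hlt
  rw [h, norm_zero] at this
  linarith

lemma mul_norm_shrinkage_add_inner_le {γ : ℝ} (hγ : 0 ≤ γ) (z p : E) :
    γ * ‖shrinkage γ z‖ + ⟪p - shrinkage γ z, z - shrinkage γ z⟫ ≤ γ * ‖p‖ := by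
  have cauchy_schwarz := real_inner_le_norm p z
  rcases le_or_gt ‖z‖ γ with h | h
  · rw [shrinkage_of_norm_le h]
    simp only [norm_zero, mul_zero, sub_zero, zero_add]
    nlinarith [norm_nonneg p]
  · have hz : 0 < ‖z‖ := hγ.trans_lt h
    have hres : z - shrinkage γ z = (γ / ‖z‖) • z := by
      rw [shrinkage_of_lt_norm hγ h, sub_smul, one_smul, sub_sub_cancel]
    rw [hres, norm_shrinkage_of_lt_norm hγ h, inner_sub_left, shrinkage_of_lt_norm hγ h,
      inner_smul_left, inner_smul_right, inner_smul_right, real_inner_self_eq_norm_sq]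
    have hcancel : (1 - γ / ‖z‖) * (γ / ‖z‖ * ‖z‖ ^ 2) = γ * (‖z‖ - γ) := by
      field_simp
    have hcs : γ / ‖z‖ * ⟪p, z⟫ ≤ γ * ‖p‖ := by
      rw [div_mul_eq_mul_div, div_le_iff₀ hz, mul_assoc]
      exact mul_le_mul_of_nonneg_left cauchy_schwarz hγ
    rw [conj_trivial, hcancel]
    linarith

def proxObjective (γ : ℝ) (z p : E) : ℝ := γ * ‖p‖ + 1 / 2 * ‖p - z‖ ^ 2

lemma proxObjective_shrinkage_add_le {γ : ℝ} (hγ : 0 ≤ γ) (z p : E) :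
    proxObjective γ z (shrinkage γ z) + 1 / 2 * ‖p - shrinkage γ z‖ ^ 2 ≤ proxObjective γ z p := by
  have key := mul_norm_shrinkage_add_inner_le hγ z p
  set s := shrinkage γ z
  rw [proxObjective, proxObjective, show p - z = (p - s) - (z - s) by abel,
    norm_sub_sq_real (p - s), norm_sub_rev s z]
  linarith

lemma shrinkage_isUniqueMin {γ : ℝ} (hγ : 0 ≤ γ) (z p : E) :
    proxObjective γ z (shrinkage γ z) ≤ proxObjective γ z p ∧
      (proxObjective γ z p = proxObjective γ z (shrinkage γ z) → p = shrinkage γ z) := by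
  have key := proxObjective_shrinkage_add_le hγ z p
  refine ⟨by nlinarith [sq_nonneg ‖p - shrinkage γ z‖], fun heq => ?_⟩
  rw [← sub_eq_zero, ← norm_eq_zero, ← sq_eq_zero_iff]
  nlinarith [sq_nonneg ‖p - shrinkage γ z‖]

lemma norm_toLp_prod (p : ℝ × ℝ) : ‖WithLp.toLp 2 p‖ = Real.sqrt (p.1 ^ 2 + p.2 ^ 2) := by
  simp [WithLp.prod_norm_eq_of_L2]

end

/-- The shrinkage `shrink_γ(z) = (max(‖z‖₂ − γ, 0)/‖z‖₂)·z` (and `0` at `z = 0`)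
is the unique global minimizer over `ℝ²` of `p ↦ γ‖p‖₂ + (1/2)‖p − z‖₂²`;
in particular the minimizer is `0` iff `‖z‖₂ ≤ γ`. -/
theorem shrinkage_unique_minimizer (γ : ℝ) (hγ : 0 < γ) (z : ℝ × ℝ)
    (shrink : ℝ × ℝ)
    (hshrink : shrink = if z = 0 then 0
        else (max (Real.sqrt (z.1 ^ 2 + z.2 ^ 2) - γ) 0
               / Real.sqrt (z.1 ^ 2 + z.2 ^ 2)) • z)
    (F : ℝ × ℝ → ℝ)
    (hF : F = fun p => γ * Real.sqrt (p.1 ^ 2 + p.2 ^ 2)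
        + (1 / 2) * ((p.1 - z.1) ^ 2 + (p.2 - z.2) ^ 2)) :
    (∀ p : ℝ × ℝ, F shrink ≤ F p ∧ (F p = F shrink → p = shrink)) ∧
      (shrink = 0 ↔ Real.sqrt (z.1 ^ 2 + z.2 ^ 2) ≤ γ) := by
  have hshrink_toLp : WithLp.toLp 2 shrink = shrinkage γ (WithLp.toLp 2 z) := by
    rw [hshrink, shrinkage, norm_toLp_prod]
    split_ifs with hz <;> simp [hz]
  have hF_toLp : ∀ p, F p = proxObjective γ (WithLp.toLp 2 z) (WithLp.toLp 2 p) := by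
    intro p
    rw [hF, proxObjective, ← WithLp.toLp_sub, norm_toLp_prod, norm_toLp_prod,
      Real.sq_sqrt (by positivity)]
    rfl
  refine ⟨fun p => ?_, ?_⟩
  · rw [hF_toLp, hF_toLp, hshrink_toLp, ← (WithLp.toLp_injective 2).eq_iff (a := p), hshrink_toLp]
    exact shrinkage_isUniqueMin hγ.le _ _
  · rw [← norm_toLp_prod, ← shrinkage_eq_zero_iff hγ.le, ← hshrink_toLp, WithLp.toLp_eq_zero]
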